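/- arXiv:2210.09362 — 2 statements merged into one kernel-verified Lean document; each statement's English description precedes it below -/
import Mathlib

section
/- Suppose Y is conditionally independent of R given the sigma-algebra generated by (X, Z), and let pi be a version of the conditional probability P(R = 1 | sigma(X,Z)) satisfying pi(X̃) >= epsilon almost surely for some epsilon > 0. Then for every beta in R^p and every bounded measurable Q: R^{p+1} -> R, the AIPW score is unbiased for the full-data score: E[S(beta; pi, Q)] = E[(b'(<X, beta>) - Y) X]. In particular, if beta satisfies E[(b'(<X, beta>) - Y) X] = 0, then E[S(beta; pi, Q)] = 0 for any working imputation model Q. -/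
/-! Algebraically, the AIPW score is the full-data score plus the augmentation term
`π(X̃)⁻¹ X (R - π(X̃)) (Q(X̃) - Y)`, so it suffices that this term has mean zero. Conditioning on
`σ(X̃)`, the bounded `σ(X̃)`-measurable factors `π(X̃)⁻¹ X` and `Q(X̃)` pull out; since
`E[R ∣ X̃] = π(X̃)`, the `Q`-part vanishes, and conditional independence gives
`E[R Y ∣ X̃] = π(X̃) E[Y ∣ X̃]`, so the `Y`-part vanishes as well. The lower bound `π ≥ ε` keeps
the weights bounded, which makes every product integrable. -/

open MeasureTheory ProbabilityTheory Matrix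

/-- `X̃ = (Z, X) ∈ ℝ^{p+1}`, the surrogate stacked on top of the covariates. -/
noncomputable def tilde {Ω : Type*} {p : ℕ} (Z : Ω → ℝ) (X : Ω → Fin p → ℝ) (ω : Ω) :
    Fin (p + 1) → ℝ := Fin.cons (Z ω) (X ω)

lemma measurable_tilde {Ω : Type*} [MeasurableSpace Ω] {p : ℕ} {Z : Ω → ℝ} {X : Ω → Fin p → ℝ}
    (hZ : Measurable Z) (hX : Measurable X) : Measurable (tilde Z X) := by
  unfold tilde
  refine measurable_pi_iff.2 fun i => ?_
  refine Fin.cases ?_ (fun j => ?_) i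
  · simpa using hZ
  · simpa using measurable_pi_iff.1 hX j

/-- The AIPW score
`S(β; π, Q) = [π(X̃)⁻¹ R (b'(⟨X,β⟩) - Y) - π(X̃)⁻¹ (R - π(X̃)) (b'(⟨X,β⟩) - Q(X̃))] X`,
an `ℝ^p`-valued random vector. -/
noncomputable def aipwScore {Ω : Type*} {p : ℕ} (X : Ω → Fin p → ℝ) (Z Y R : Ω → ℝ)
    (b : ℝ → ℝ) (β : Fin p → ℝ) (π Q : (Fin (p + 1) → ℝ) → ℝ) (ω : Ω) : Fin p → ℝ :=
  fun i =>
    ((π (tilde Z X ω))⁻¹ * R ω * (deriv b (X ω ⬝ᵥ β) - Y ω)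
        - (π (tilde Z X ω))⁻¹ * (R ω - π (tilde Z X ω))
          * (deriv b (X ω ⬝ᵥ β) - Q (tilde Z X ω))) * X ω i

open scoped ENNReal

theorem integral_add_eq_left_of_integrable {Ω E : Type*} [MeasurableSpace Ω] {μ : Measure Ω}
    [NormedAddCommGroup E] [NormedSpace ℝ E] {f g : Ω → E} (hf : Integrable f μ)
    (hf0 : ∫ ω, f ω ∂μ = 0) :
    ∫ ω, g ω + f ω ∂μ = ∫ ω, g ω ∂μ := by
  by_cases hg : Integrable g μ
  · rw [integral_add hg hf, hf0, add_zero]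
  · have hgf : ¬Integrable (fun ω => g ω + f ω) μ := fun h =>
      hg ((h.sub hf).congr (ae_of_all _ fun ω => add_sub_cancel_right (g ω) (f ω)))
    rw [integral_undef hg, integral_undef hgf]

theorem ProbabilityTheory.CondIndepFun.condExp_mul {Ω : Type*} {m mΩ : MeasurableSpace Ω}
    [StandardBorelSpace Ω] {hm : m ≤ mΩ} {μ : Measure Ω} [IsFiniteMeasure μ] {f g : Ω → ℝ}
    (hfg : CondIndepFun m hm f g μ) (hf : Measurable f) (hg : Measurable g)
    (hfi : Integrable f μ) (hgi : Integrable g μ) (hfgi : Integrable (f * g) μ) :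
    μ[f * g | m] =ᵐ[μ] μ[f | m] * μ[g | m] := by
  -- Under the regular conditional probabilities `condExpKernel μ m ω`, `f` and `g` are independent
  -- for a.e. `ω`, so the unconditional product formula applies fibrewise.
  have hindep : ∀ᵐ ω ∂μ, IndepFun f g (condExpKernel μ m ω) := by
    refine ae_of_ae_trim hm ?_
    filter_upwards [(condIndepFun_iff_map_prod_eq_prod_map_map hf hg).1 hfg] with ω hω
    rw [indepFun_iff_map_prod_eq_prod_map_map hf.aemeasurable hg.aemeasurable]
    simpa [Kernel.map_apply _ (hf.prodMk hg), Kernel.map_apply _ hf, Kernel.map_apply _ hg,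
      Kernel.prod_apply] using hω
  filter_upwards [hindep, condExp_ae_eq_integral_condExpKernel hm hfgi,
    condExp_ae_eq_integral_condExpKernel hm hfi, condExp_ae_eq_integral_condExpKernel hm hgi]
    with ω hω h_fg h_f h_g
  rw [h_fg, Pi.mul_apply, h_f, h_g]
  exact hω.integral_mul_eq_mul_integral hf.aestronglyMeasurable hg.aestronglyMeasurable

section
variable {Ω : Type*} {m mΩ : MeasurableSpace Ω} {μ : Measure Ω} [IsFiniteMeasure μ]

theorem integral_mul_condExp_of_stronglyMeasurable (hm : m ≤ mΩ) {h f : Ω → ℝ}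
    (hh : StronglyMeasurable[m] h) (hh_top : MemLp h ∞ μ) (hf : Integrable f μ) :
    ∫ ω, h ω * μ[f | m] ω ∂μ = ∫ ω, h ω * f ω ∂μ :=
  calc ∫ ω, h ω * μ[f | m] ω ∂μ = ∫ ω, μ[h * f | m] ω ∂μ :=
        integral_congr_ae (condExp_mul_of_stronglyMeasurable_left hh
          (hf.mul_of_top_right hh_top) hf).symm
    _ = ∫ ω, h ω * f ω ∂μ := integral_condExp hm

theorem integral_mul_sub_condExp_mul_eq_zero (hm : m ≤ mΩ) {h R V : Ω → ℝ}
    (hh : StronglyMeasurable[m] h) (hh_top : MemLp h ∞ μ) (hR : MemLp R ∞ μ)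
    (hV : Integrable V μ) (hRV : μ[R * V | m] =ᵐ[μ] μ[R | m] * μ[V | m]) :
    ∫ ω, h ω * (R ω - μ[R | m] ω) * V ω ∂μ = 0 := by
  have hκ_top : MemLp (h * μ[R | m]) ∞ μ := (hR.condExp le_top).mul hh_top
  have hκ : StronglyMeasurable[m] (h * μ[R | m]) := hh.mul stronglyMeasurable_condExp
  have hRV_int : Integrable (R * V) μ := hV.mul_of_top_right hR
  have h_RV : ∫ ω, h ω * (R ω * V ω) ∂μ = ∫ ω, (h * μ[R | m]) ω * μ[V | m] ω ∂μ := by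
    rw [show (fun ω => h ω * (R ω * V ω)) = fun ω => h ω * (R * V) ω from rfl,
      ← integral_mul_condExp_of_stronglyMeasurable hm hh hh_top hRV_int]
    refine integral_congr_ae ?_
    filter_upwards [hRV] with ω hω
    simp only [hω, Pi.mul_apply]
    ring
  have h_V : ∫ ω, (h * μ[R | m]) ω * V ω ∂μ = ∫ ω, (h * μ[R | m]) ω * μ[V | m] ω ∂μ :=
    (integral_mul_condExp_of_stronglyMeasurable hm hκ hκ_top hV).symm
  calc ∫ ω, h ω * (R ω - μ[R | m] ω) * V ω ∂μ
      = ∫ ω, h ω * (R ω * V ω) ∂μ - ∫ ω, (h * μ[R | m]) ω * V ω ∂μ := by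
        rw [← integral_sub (f := fun ω => h ω * (R ω * V ω))
          (g := fun ω => (h * μ[R | m]) ω * V ω)
          (hRV_int.mul_of_top_right hh_top) (hV.mul_of_top_right hκ_top)]
        congr 1 with ω
        simp only [Pi.mul_apply]
        ring
    _ = 0 := by rw [h_RV, h_V, sub_self]

theorem integral_mul_sub_condExp_mul_sub_eq_zero (hm : m ≤ mΩ) {w q R Y : Ω → ℝ}
    (hw : StronglyMeasurable[m] w) (hw_top : MemLp w ∞ μ)
    (hq : StronglyMeasurable[m] q) (hq_top : MemLp q ∞ μ) (hR : MemLp R ∞ μ)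
    (hY : Integrable Y μ) (hRY : μ[R * Y | m] =ᵐ[μ] μ[R | m] * μ[Y | m]) :
    ∫ ω, w ω * (R ω - μ[R | m] ω) * (q ω - Y ω) ∂μ = 0 := by
  have h_q : ∫ ω, w ω * (R ω - μ[R | m] ω) * q ω ∂μ = 0 := by
    rw [← integral_mul_sub_condExp_mul_eq_zero hm (hw.mul hq) (hq_top.mul hw_top) hR
      (integrable_const 1) (by rw [condExp_const hm]; simp [← Pi.one_def])]
    congr 1 with ω
    simp only [Pi.mul_apply]
    ring
  have h_Y := integral_mul_sub_condExp_mul_eq_zero hm hw hw_top hR hY hRY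
  have hwR_top : MemLp (w * (R - μ[R | m])) ∞ μ := (hR.sub (hR.condExp le_top)).mul hw_top
  calc ∫ ω, w ω * (R ω - μ[R | m] ω) * (q ω - Y ω) ∂μ
      = ∫ ω, w ω * (R ω - μ[R | m] ω) * q ω ∂μ - ∫ ω, w ω * (R ω - μ[R | m] ω) * Y ω ∂μ := by
        rw [← integral_sub (f := fun ω => w ω * (R ω - μ[R | m] ω) * q ω)
          (g := fun ω => w ω * (R ω - μ[R | m] ω) * Y ω)
          ((hq_top.integrable le_top).mul_of_top_right hwR_top) (hY.mul_of_top_right hwR_top)]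
        congr 1 with ω
        ring
    _ = 0 := by rw [h_q, h_Y, sub_self]

theorem integral_add_mul_sub_mul_sub_eq_left (hm : m ≤ mΩ) {g w κ q R Y : Ω → ℝ}
    (hw : StronglyMeasurable[m] w) (hw_top : MemLp w ∞ μ)
    (hq : StronglyMeasurable[m] q) (hq_top : MemLp q ∞ μ) (hR : MemLp R ∞ μ)
    (hY : Integrable Y μ) (hκ : κ =ᵐ[μ] μ[R | m])
    (hRY : μ[R * Y | m] =ᵐ[μ] μ[R | m] * μ[Y | m]) :
    ∫ ω, g ω + w ω * (R ω - κ ω) * (q ω - Y ω) ∂μ = ∫ ω, g ω ∂μ := by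
  have hκ_top : MemLp κ ∞ μ := (hR.condExp le_top).ae_eq hκ.symm
  refine integral_add_eq_left_of_integrable
    (((hq_top.integrable le_top).sub hY).mul_of_top_right ((hR.sub hκ_top).mul hw_top)) ?_
  rw [← integral_mul_sub_condExp_mul_sub_eq_zero hm hw hw_top hq hq_top hR hY hRY]
  refine integral_congr_ae ?_
  filter_upwards [hκ] with ω hω
  rw [hω]

end

lemma aipwScore_apply_eq_add {Ω : Type*} {p : ℕ} (X : Ω → Fin p → ℝ) (Z Y R : Ω → ℝ)
    (b : ℝ → ℝ) (β : Fin p → ℝ) (π Q : (Fin (p + 1) → ℝ) → ℝ) {ω : Ω}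
    (hπ : π (tilde Z X ω) ≠ 0) (i : Fin p) :
    aipwScore X Z Y R b β π Q ω i = (deriv b (X ω ⬝ᵥ β) - Y ω) * X ω i
      + X ω i / π (tilde Z X ω) * (R ω - π (tilde Z X ω)) * (Q (tilde Z X ω) - Y ω) := by
  simp only [aipwScore]
  field_simp
  ring

theorem aipw_unbiased_with_true_propensity_general
    {Ω : Type*} [MeasurableSpace Ω] [StandardBorelSpace Ω] {P : Measure Ω}
    [IsProbabilityMeasure P] {p : ℕ}
    (X : Ω → Fin p → ℝ) (Z Y R : Ω → ℝ)
    (hX : Measurable X) (hZ : Measurable Z) (hY : Measurable Y) (hR : Measurable R)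
    (hXbd : ∃ C, ∀ ω i, |X ω i| ≤ C)
    (hYint : Integrable Y P)
    (hR01 : ∀ ω, R ω = 0 ∨ R ω = 1)
    (b : ℝ → ℝ)
    -- `Y` is conditionally independent of `R` given `σ(X, Z)`
    (hYR : CondIndepFun (MeasurableSpace.comap (tilde Z X) inferInstance)
      (measurable_tilde hZ hX).comap_le Y R P)
    (π : (Fin (p + 1) → ℝ) → ℝ) (hπmeas : Measurable π)
    (hπrange : ∀ x, 0 < π x ∧ π x ≤ 1)
    -- `π` is a version of `P(R = 1 ∣ σ(X, Z)) = E[R ∣ σ(X, Z)]`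
    (hπver : (fun ω => π (tilde Z X ω)) =ᵐ[P]
      P[R | MeasurableSpace.comap (tilde Z X) inferInstance])
    (hπeps : ∃ ε > (0 : ℝ), ∀ᵐ ω ∂P, ε ≤ π (tilde Z X ω)) :
    (∀ (β : Fin p → ℝ) (Q : (Fin (p + 1) → ℝ) → ℝ), Measurable Q → (∃ C, ∀ x, |Q x| ≤ C) →
        ∀ i, ∫ ω, aipwScore X Z Y R b β π Q ω i ∂P
          = ∫ ω, (deriv b (X ω ⬝ᵥ β) - Y ω) * X ω i ∂P) ∧
      (∀ (β : Fin p → ℝ) (Q : (Fin (p + 1) → ℝ) → ℝ), Measurable Q → (∃ C, ∀ x, |Q x| ≤ C) →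
        (∀ i, ∫ ω, (deriv b (X ω ⬝ᵥ β) - Y ω) * X ω i ∂P = 0) →
        ∀ i, ∫ ω, aipwScore X Z Y R b β π Q ω i ∂P = 0) := by
  obtain ⟨CX, hCX⟩ := hXbd
  obtain ⟨ε, hε, hπε⟩ := hπeps
  have ht := measurable_tilde hZ hX
  have hR_top : MemLp R ∞ P := memLp_top_of_bound hR.aestronglyMeasurable 1
    (ae_of_all _ fun ω => by rcases hR01 ω with h | h <;> simp [h])
  have unbiased : ∀ (β : Fin p → ℝ) (Q : (Fin (p + 1) → ℝ) → ℝ), Measurable Q →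
      (∃ C, ∀ x, |Q x| ≤ C) → ∀ i, ∫ ω, aipwScore X Z Y R b β π Q ω i ∂P
        = ∫ ω, (deriv b (X ω ⬝ᵥ β) - Y ω) * X ω i ∂P := by
    rintro β Q hQ ⟨CQ, hCQ⟩ i
    have hw := (((measurable_pi_apply i.succ).div hπmeas).comp (comap_measurable (tilde Z X)))
    have hq := hQ.comp (comap_measurable (tilde Z X))
    have hw_top : MemLp (fun ω => X ω i / π (tilde Z X ω)) ∞ P := by
      refine memLp_top_of_bound (hw.mono ht.comap_le le_rfl).aestronglyMeasurable (CX / ε) ?_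
      filter_upwards [hπε] with ω hω
      rw [Real.norm_eq_abs, abs_div, abs_of_pos (hπrange _).1]
      exact div_le_div₀ ((abs_nonneg _).trans (hCX ω i)) (hCX ω i) hε hω
    have hq_top : MemLp (fun ω => Q (tilde Z X ω)) ∞ P :=
      memLp_top_of_bound (hq.mono ht.comap_le le_rfl).aestronglyMeasurable CQ
        (ae_of_all _ fun ω => hCQ _)
    simp_rw [aipwScore_apply_eq_add X Z Y R b β π Q (hπrange _).1.ne']
    exact integral_add_mul_sub_mul_sub_eq_left ht.comap_le hw.stronglyMeasurable hw_top
      hq.stronglyMeasurable hq_top hR_top hYint hπver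
      (hYR.symm.condExp_mul hR hY (hR_top.integrable le_top) hYint (hYint.mul_of_top_right hR_top))
  exact ⟨unbiased, fun β Q hQ hQ_bdd h0 i => (unbiased β Q hQ hQ_bdd i).trans (h0 i)⟩

/-- If `Y ⟂ R ∣ σ(X, Z)` and `π` is a version of the conditional probability
`P(R = 1 ∣ σ(X, Z))` bounded below by some `ε > 0` a.s., then for every `β ∈ ℝ^p` and every
bounded measurable working imputation model `Q`, the AIPW score is unbiased for the full-data
score: `E[S(β; π, Q)] = E[(b'(⟨X, β⟩) - Y) X]`.  In particular, if
`E[(b'(⟨X, β⟩) - Y) X] = 0`, then `E[S(β; π, Q)] = 0` for any such `Q`. -/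
theorem aipw_unbiased_with_true_propensity
    {Ω : Type*} [MeasurableSpace Ω] [StandardBorelSpace Ω] {P : Measure Ω}
    [IsProbabilityMeasure P] {p : ℕ}
    (X : Ω → Fin p → ℝ) (Z Y R : Ω → ℝ)
    (hX : Measurable X) (hZ : Measurable Z) (hY : Measurable Y) (hR : Measurable R)
    (hXbd : ∃ C, ∀ ω i, |X ω i| ≤ C) (hZbd : ∃ C, ∀ ω, |Z ω| ≤ C)
    (hYint : Integrable Y P)
    (hR01 : ∀ ω, R ω = 0 ∨ R ω = 1)
    (b : ℝ → ℝ) (hb : Differentiable ℝ b) (hb' : Measurable (deriv b))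
    -- `Y` is conditionally independent of `R` given `σ(X, Z)`
    (hYR : CondIndepFun (MeasurableSpace.comap (tilde Z X) inferInstance)
      (measurable_tilde hZ hX).comap_le Y R P)
    (π : (Fin (p + 1) → ℝ) → ℝ) (hπmeas : Measurable π)
    (hπrange : ∀ x, 0 < π x ∧ π x ≤ 1)
    -- `π` is a version of `P(R = 1 ∣ σ(X, Z)) = E[R ∣ σ(X, Z)]`
    (hπver : (fun ω => π (tilde Z X ω)) =ᵐ[P]
      P[R | MeasurableSpace.comap (tilde Z X) inferInstance])
    (hπeps : ∃ ε > (0 : ℝ), ∀ᵐ ω ∂P, ε ≤ π (tilde Z X ω)) :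
    (∀ (β : Fin p → ℝ) (Q : (Fin (p + 1) → ℝ) → ℝ), Measurable Q → (∃ C, ∀ x, |Q x| ≤ C) →
        ∀ i, ∫ ω, aipwScore X Z Y R b β π Q ω i ∂P
          = ∫ ω, (deriv b (X ω ⬝ᵥ β) - Y ω) * X ω i ∂P) ∧
      (∀ (β : Fin p → ℝ) (Q : (Fin (p + 1) → ℝ) → ℝ), Measurable Q → (∃ C, ∀ x, |Q x| ≤ C) →
        (∀ i, ∫ ω, (deriv b (X ω ⬝ᵥ β) - Y ω) * X ω i ∂P = 0) →
        ∀ i, ∫ ω, aipwScore X Z Y R b β π Q ω i ∂P = 0) :=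
  aipw_unbiased_with_true_propensity_general X Z Y R hX hZ hY hR hXbd hYint hR01 b hYR π hπmeas
    hπrange hπver hπeps
end

section
/- Assume the regularity condition: for mu-almost every w, J_1(w) = 0 implies J_0(w) = 0. Define pi_*^{-1}(w) = 1 + (1 - rho) J_0(w) / (rho J_1(w)) on the set {w : J_1(w) != 0}, and pi_*^{-1}(w) = 1 on {J_1(w) = 0}. Then pi_*^{-1} is well defined mu-almost everywhere on {J_1 != 0}, and the function x̃ -> pi_*^{-1}(Gamma^T x̃) solves the weighting equation: for every bounded measurable f: R^d -> R, E[(R * pi_*^{-1}(W) - 1) f(W) <X, v>] = 0. (Existence part of Theorem 2.) -/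
/-!
Split the expectation over the groups `{R = 1}` and `{R = 0}`. Within group `r`, conditioning on
`W` replaces `⟨X, v⟩` by `a_r(W)`, and the density of `W` turns the expectation of `φ(W) a_r(W)`
into `∫ φ J_r dμ`. Hence `E[R π(W) f(W) ⟨X, v⟩] = ρ ∫ π f J₁ dμ` and
`E[f(W) ⟨X, v⟩] = ρ ∫ f J₁ dμ + (1 - ρ) ∫ f J₀ dμ`, and the two agree because
`ρ π J₁ = ρ J₁ + (1 - ρ) J₀` holds `μ`-a.e.: off `{J₁ = 0}` by the choice of `π`, and on it by
the regularity condition.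
-/

open MeasureTheory ProbabilityTheory Matrix

/-- `Γᵀ x` for a `(p+1) × d` matrix `Γ` and `x ∈ ℝ^{p+1}`. -/
noncomputable def matT {n d : ℕ} (Γ : Matrix (Fin n) (Fin d) ℝ) (x : Fin n → ℝ) : Fin d → ℝ :=
  fun j => ∑ i, Γ i j * x i

/-- The weighting function `π_*⁻¹(w) = 1 + (1 - ρ) J₀(w) / (ρ J₁(w))` on `{J₁ ≠ 0}`,
set to `1` on `{J₁ = 0}`. -/
noncomputable def piStarInv {d : ℕ} (ρ : ℝ) (J0 J1 : (Fin d → ℝ) → ℝ) (w : Fin d → ℝ) : ℝ :=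
  if J1 w ≠ 0 then 1 + (1 - ρ) * J0 w / (ρ * J1 w) else 1

lemma measurable_matT {n d : ℕ} (Γ : Matrix (Fin n) (Fin d) ℝ) : Measurable (matT Γ) := by
  unfold matT; fun_prop

lemma measurable_piStarInv {d : ℕ} (ρ : ℝ) {J0 J1 : (Fin d → ℝ) → ℝ} (h0 : Measurable J0)
    (h1 : Measurable J1) : Measurable (piStarInv ρ J0 J1) := by
  unfold piStarInv
  exact Measurable.ite (h1 (measurableSet_singleton 0)).compl (by fun_prop) measurable_const

lemma mul_piStarInv_mul {d : ℕ} {ρ : ℝ} (hρ : ρ ≠ 0) {J0 J1 : (Fin d → ℝ) → ℝ} {w : Fin d → ℝ}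
    (hw : J1 w = 0 → J0 w = 0) :
    ρ * (piStarInv ρ J0 J1 w * J1 w) = ρ * J1 w + (1 - ρ) * J0 w := by
  by_cases h1 : J1 w = 0
  · simp [h1, hw h1]
  · simp only [piStarInv, ne_eq, h1, not_false_eq_true, if_true]
    field_simp

lemma abs_dotProduct_le {ι : Type*} [Fintype ι] {x : ι → ℝ} {C : ℝ} (hx : ∀ i, |x i| ≤ C)
    (v : ι → ℝ) : |x ⬝ᵥ v| ≤ C * ∑ i, |v i| := by
  rw [Finset.mul_sum]
  refine (Finset.abs_sum_le_sum_abs _ _).trans (Finset.sum_le_sum fun i _ => ?_)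
  rw [abs_mul]
  exact mul_le_mul_of_nonneg_right (hx i) (abs_nonneg _)

lemma mul_eq_indicator_of_eq_zero_or_eq_one {Ω : Type*} {R : Ω → ℝ}
    (hR01 : ∀ ω, R ω = 0 ∨ R ω = 1) (h : Ω → ℝ) :
    (fun ω => R ω * h ω) = {ω | R ω = 1}.indicator h := by
  funext ω
  rcases hR01 ω with hω | hω <;> simp [hω]

section Density

variable {Ω β : Type*} [MeasurableSpace Ω] [MeasurableSpace β] {Q : Measure Ω} {W : Ω → β}
  {μ : Measure β} {η : β → ℝ} {F : β → ℝ}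

lemma integral_comp_eq_integral_mul_of_map_eq_withDensity (hW : Measurable W)
    (hη : Measurable η) (hη0 : ∀ w, 0 ≤ η w)
    (hdens : Q.map W = μ.withDensity fun w => ENNReal.ofReal (η w)) (hF : Measurable F) :
    ∫ ω, F (W ω) ∂Q = ∫ w, F w * η w ∂μ := by
  rw [← integral_map hW.aemeasurable hF.aestronglyMeasurable, hdens,
    integral_withDensity_eq_integral_toReal_smul (by fun_prop)
      (.of_forall fun _ => ENNReal.ofReal_lt_top)]
  refine integral_congr_ae (.of_forall fun w => ?_)
  simp [ENNReal.toReal_ofReal (hη0 w), mul_comm]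

lemma Integrable.mul_of_map_eq_withDensity (hW : Measurable W)
    (hη : Measurable η) (hη0 : ∀ w, 0 ≤ η w)
    (hdens : Q.map W = μ.withDensity fun w => ENNReal.ofReal (η w)) (hF : Measurable F)
    (hFW : Integrable (fun ω => F (W ω)) Q) :
    Integrable (fun w => F w * η w) μ := by
  have hF' := (integrable_map_measure hF.aestronglyMeasurable hW.aemeasurable).mpr hFW
  rw [hdens, integrable_withDensity_iff (by fun_prop)
    (.of_forall fun _ => ENNReal.ofReal_lt_top)] at hF'
  refine hF'.congr (.of_forall fun w => ?_)
  simp [ENNReal.toReal_ofReal (hη0 w)]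

lemma condExp_comap_comp_mul_ae_eq {h : Ω → ℝ} (hh : Integrable h Q) {a : β → ℝ}
    (ha : (fun ω => a (W ω)) =ᵐ[Q] Q[h | MeasurableSpace.comap W inferInstance])
    {φ : β → ℝ} (hφ : Measurable φ) (hφh : Integrable (fun ω => φ (W ω) * h ω) Q) :
    Q[fun ω => φ (W ω) * h ω | MeasurableSpace.comap W inferInstance]
      =ᵐ[Q] fun ω => φ (W ω) * a (W ω) := by
  have hφW : StronglyMeasurable[MeasurableSpace.comap W inferInstance] fun ω => φ (W ω) :=
    (hφ.comp (comap_measurable W)).stronglyMeasurable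
  filter_upwards [condExp_mul_of_stronglyMeasurable_left hφW hφh hh, ha] with ω h₁ h₂
  rw [h₂]
  exact h₁

variable {h : Ω → ℝ} {a φ : β → ℝ}

lemma integrable_mul_density_of_ae_eq_condExp_comap (hW : Measurable W) (hh : Integrable h Q)
    (ha : Measurable a)
    (hav : (fun ω => a (W ω)) =ᵐ[Q] Q[h | MeasurableSpace.comap W inferInstance])
    (hη : Measurable η) (hη0 : ∀ w, 0 ≤ η w)
    (hdens : Q.map W = μ.withDensity fun w => ENNReal.ofReal (η w))
    (hφ : Measurable φ) (hφh : Integrable (fun ω => φ (W ω) * h ω) Q) :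
    Integrable (fun w => φ w * a w * η w) μ :=
  Integrable.mul_of_map_eq_withDensity hW hη hη0 hdens (hφ.mul ha)
    (integrable_condExp.congr (condExp_comap_comp_mul_ae_eq hh hav hφ hφh))

variable [IsFiniteMeasure Q]

lemma integral_comp_mul_eq_integral_mul_density (hW : Measurable W) (hh : Integrable h Q)
    (ha : Measurable a)
    (hav : (fun ω => a (W ω)) =ᵐ[Q] Q[h | MeasurableSpace.comap W inferInstance])
    (hη : Measurable η) (hη0 : ∀ w, 0 ≤ η w)
    (hdens : Q.map W = μ.withDensity fun w => ENNReal.ofReal (η w))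
    (hφ : Measurable φ) (hφh : Integrable (fun ω => φ (W ω) * h ω) Q) :
    ∫ ω, φ (W ω) * h ω ∂Q = ∫ w, φ w * a w * η w ∂μ := by
  rw [← integral_condExp hW.comap_le,
    integral_congr_ae (condExp_comap_comp_mul_ae_eq hh hav hφ hφh)]
  exact integral_comp_eq_integral_mul_of_map_eq_withDensity hW hη hη0 hdens (hφ.mul ha)

end Density

section Conditioning

variable {Ω : Type*} [MeasurableSpace Ω] {P : Measure Ω} {R : Ω → ℝ}

lemma Integrable.cond_of_mul (hR : Measurable R) (hR01 : ∀ ω, R ω = 0 ∨ R ω = 1) {h : Ω → ℝ}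
    (hRh : Integrable (fun ω => R ω * h ω) P) : Integrable h P[|{ω | R ω = 1}] := by
  rcases eq_or_ne (P {ω | R ω = 1}) 0 with h0 | h0
  · simp [cond_eq_zero_of_meas_eq_zero h0]
  have hA : MeasurableSet {ω | R ω = 1} := hR (measurableSet_singleton 1)
  rw [mul_eq_indicator_of_eq_zero_or_eq_one hR01, integrable_indicator_iff hA] at hRh
  exact hRh.smul_measure (ENNReal.inv_ne_top.mpr h0)

variable [IsFiniteMeasure P]

lemma setIntegral_eq_measureReal_mul_integral_cond (s : Set Ω) (h : Ω → ℝ) :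
    ∫ ω in s, h ω ∂P = P.real s * ∫ ω, h ω ∂P[|s] := by
  by_cases hs : P s = 0
  · simp [Measure.restrict_eq_zero.mpr hs, measureReal_def, hs]
  · rw [ProbabilityTheory.cond, integral_smul_measure, ENNReal.toReal_inv, smul_eq_mul,
      ← mul_assoc, measureReal_def,
      mul_inv_cancel₀ (ENNReal.toReal_ne_zero.mpr ⟨hs, measure_ne_top P s⟩), one_mul]

lemma integral_eq_cond_add_cond_compl {s : Set Ω} (hs : MeasurableSet s) {h : Ω → ℝ}
    (hh : Integrable h P) :
    ∫ ω, h ω ∂P = P.real s * ∫ ω, h ω ∂P[|s] + P.real sᶜ * ∫ ω, h ω ∂P[|sᶜ] := by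
  rw [← integral_add_compl hs hh, setIntegral_eq_measureReal_mul_integral_cond,
    setIntegral_eq_measureReal_mul_integral_cond]

lemma integral_mul_eq_measureReal_mul_integral_cond (hR : Measurable R)
    (hR01 : ∀ ω, R ω = 0 ∨ R ω = 1) (h : Ω → ℝ) :
    ∫ ω, R ω * h ω ∂P = P.real {ω | R ω = 1} * ∫ ω, h ω ∂P[|{ω | R ω = 1}] := by
  have hA : MeasurableSet {ω | R ω = 1} := hR (measurableSet_singleton 1)
  rw [mul_eq_indicator_of_eq_zero_or_eq_one hR01, integral_indicator hA,
    setIntegral_eq_measureReal_mul_integral_cond]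

end Conditioning

theorem piStarInv_solves_weighting_equation_general
    {Ω : Type*} [MeasurableSpace Ω] {P : Measure Ω}
    [IsProbabilityMeasure P] {p d : ℕ}
    (X : Ω → Fin p → ℝ) (Z R : Ω → ℝ)
    (hX : Measurable X) (hZ : Measurable Z) (hR : Measurable R)
    (hXbd : ∃ C, ∀ ω i, |X ω i| ≤ C)
    (hR01 : ∀ ω, R ω = 0 ∨ R ω = 1)
    (Γ : Matrix (Fin (p + 1)) (Fin d) ℝ) (v : Fin p → ℝ)
    -- `ρ = P(R = 1) ∈ (0, 1)`
    (ρ : ℝ) (hρdef : ρ = (P {ω | R ω = 1}).toReal) (hρ0 : 0 < ρ)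
    -- density setup: the conditional law of `W` given `R = r` has density `η_r` w.r.t. `μ`
    (μ : Measure (Fin d → ℝ))
    (η₀ η₁ : (Fin d → ℝ) → ℝ) (hη₀m : Measurable η₀) (hη₁m : Measurable η₁)
    (hη₀0 : ∀ w, 0 ≤ η₀ w) (hη₁0 : ∀ w, 0 ≤ η₁ w)
    (hdens₀ : Measure.map (fun ω => matT Γ (tilde Z X ω)) (P[|{ω | R ω = 0}])
      = μ.withDensity fun w => ENNReal.ofReal (η₀ w))
    (hdens₁ : Measure.map (fun ω => matT Γ (tilde Z X ω)) (P[|{ω | R ω = 1}])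
      = μ.withDensity fun w => ENNReal.ofReal (η₁ w))
    -- `a_r(W)` is a version of `E[⟨X, v⟩ ∣ σ(W)]` under `P(· ∣ R = r)`
    (a₀ a₁ : (Fin d → ℝ) → ℝ) (ha₀m : Measurable a₀) (ha₁m : Measurable a₁)
    (ha₀ver : (fun ω => a₀ (matT Γ (tilde Z X ω))) =ᵐ[P[|{ω | R ω = 0}]]
      (P[|{ω | R ω = 0}])[fun ω => X ω ⬝ᵥ v |
        MeasurableSpace.comap (fun ω => matT Γ (tilde Z X ω)) inferInstance])
    (ha₁ver : (fun ω => a₁ (matT Γ (tilde Z X ω))) =ᵐ[P[|{ω | R ω = 1}]]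
      (P[|{ω | R ω = 1}])[fun ω => X ω ⬝ᵥ v |
        MeasurableSpace.comap (fun ω => matT Γ (tilde Z X ω)) inferInstance])
    -- regularity condition: for `μ`-a.e. `w`, `J₁(w) = 0` implies `J₀(w) = 0`
    (hreg : ∀ᵐ w ∂μ, a₁ w * η₁ w = 0 → a₀ w * η₀ w = 0) :
    -- `π_*⁻¹` is well defined `μ`-a.e. on `{J₁ ≠ 0}` ...
    (∀ᵐ w ∂μ, a₁ w * η₁ w ≠ 0 → ρ * (a₁ w * η₁ w) ≠ 0) ∧
      -- ... and it solves the weighting equation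
      ∀ f : (Fin d → ℝ) → ℝ, Measurable f → (∃ C, ∀ w, |f w| ≤ C) →
        ∫ ω, (R ω * piStarInv ρ (fun w => a₀ w * η₀ w) (fun w => a₁ w * η₁ w)
            (matT Γ (tilde Z X ω)) - 1) * f (matT Γ (tilde Z X ω)) * (X ω ⬝ᵥ v) ∂P = 0 := by
  set W := fun ω => matT Γ (tilde Z X ω)
  set g := piStarInv ρ (fun w => a₀ w * η₀ w) (fun w => a₁ w * η₁ w)
  have hW : Measurable W := (measurable_matT Γ).comp (measurable_tilde hZ hX)
  have hA : MeasurableSet {ω | R ω = 1} := hR (measurableSet_singleton 1)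
  have hAc : {ω | R ω = 0} = {ω | R ω = 1}ᶜ := by ext ω; rcases hR01 ω with h | h <;> simp [h]
  rw [hAc] at hdens₀ ha₀ver
  obtain ⟨C, hC⟩ := hXbd
  have hYint (Q : Measure Ω) [IsFiniteMeasure Q] : Integrable (fun ω => X ω ⬝ᵥ v) Q :=
    .of_bound (by fun_prop) _ (.of_forall fun ω => abs_dotProduct_le (hC ω) v)
  refine ⟨.of_forall fun w hw => mul_ne_zero hρ0.ne' hw, fun f hf ⟨Cf, hCf⟩ => ?_⟩
  have hfY (Q : Measure Ω) [IsFiniteMeasure Q] : Integrable (fun ω => f (W ω) * (X ω ⬝ᵥ v)) Q :=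
    (hYint Q).bdd_mul (hf.comp hW).aestronglyMeasurable (.of_forall fun ω => hCf (W ω))
  -- If the first term is not integrable, neither is the integrand, whose integral is then `0`.
  by_cases hint : Integrable (fun ω => R ω * (g (W ω) * f (W ω) * (X ω ⬝ᵥ v))) P
  swap
  · refine integral_undef fun hF => hint ((hF.add (hfY P)).congr (.of_forall fun ω => ?_))
    simp only [Pi.add_apply]
    ring
  have hg : Measurable g := measurable_piStarInv ρ (ha₀m.mul hη₀m) (ha₁m.mul hη₁m)
  have hgf₁ := integral_comp_mul_eq_integral_mul_density hW (hYint _) ha₁m ha₁ver hη₁m hη₁0 hdens₁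
    (φ := fun w => g w * f w) (hg.mul hf) (Integrable.cond_of_mul hR hR01 hint)
  have hf₁ := integral_comp_mul_eq_integral_mul_density hW (hYint _) ha₁m ha₁ver hη₁m hη₁0 hdens₁
    hf (hfY _)
  have hf₀ := integral_comp_mul_eq_integral_mul_density hW (hYint _) ha₀m ha₀ver hη₀m hη₀0 hdens₀
    hf (hfY _)
  have hfJ₁ := integrable_mul_density_of_ae_eq_condExp_comap hW (hYint _) ha₁m ha₁ver hη₁m hη₁0
    hdens₁ hf (hfY _)
  have hfJ₀ := integrable_mul_density_of_ae_eq_condExp_comap hW (hYint _) ha₀m ha₀ver hη₀m hη₀0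
    hdens₀ hf (hfY _)
  have hpt : ∀ᵐ w ∂μ, ρ * (g w * f w * a₁ w * η₁ w)
      = ρ * (f w * a₁ w * η₁ w) + (1 - ρ) * (f w * a₀ w * η₀ w) := by
    filter_upwards [hreg] with w hw
    linear_combination f w * mul_piStarInv_mul (J0 := fun w => a₀ w * η₀ w)
      (J1 := fun w => a₁ w * η₁ w) hρ0.ne' hw
  have hρ : P.real {ω | R ω = 1} = ρ := hρdef.symm
  have hρc : P.real {ω | R ω = 1}ᶜ = 1 - ρ := by rw [probReal_compl_eq_one_sub hA, hρ]
  calc _ = ∫ ω, R ω * (g (W ω) * f (W ω) * (X ω ⬝ᵥ v)) ∂P - ∫ ω, f (W ω) * (X ω ⬝ᵥ v) ∂P := by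
        rw [← integral_sub hint (hfY P)]; congr 1; funext ω; ring
    _ = ρ * ∫ w, g w * f w * a₁ w * η₁ w ∂μ
          - (ρ * ∫ w, f w * a₁ w * η₁ w ∂μ + (1 - ρ) * ∫ w, f w * a₀ w * η₀ w ∂μ) := by
        rw [integral_mul_eq_measureReal_mul_integral_cond hR hR01,
          integral_eq_cond_add_cond_compl hA (hfY P), hgf₁, hf₁, hf₀, hρc, hρ]
    _ = 0 := by
        rw [← integral_const_mul, integral_congr_ae hpt, integral_add (hfJ₁.const_mul ρ)
          (hfJ₀.const_mul _), integral_const_mul, integral_const_mul, sub_self]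

/-- **existence part of Theorem 2.** Under the regularity condition that
`J₁(w) = 0 → J₀(w) = 0` for `μ`-a.e. `w` (where `J_r = a_r η_r`), the function `π_*⁻¹` is well
defined `μ`-a.e. on `{J₁ ≠ 0}` (the denominator `ρ J₁` does not vanish there), and
`x̃ ↦ π_*⁻¹(Γᵀ x̃)` solves the weighting equation:
`E[(R π_*⁻¹(W) - 1) f(W) ⟨X, v⟩] = 0` for every bounded measurable `f`. -/
theorem piStarInv_solves_weighting_equation
    {Ω : Type*} [MeasurableSpace Ω] {P : Measure Ω}
    [IsProbabilityMeasure P] {p d : ℕ}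
    (X : Ω → Fin p → ℝ) (Z R : Ω → ℝ)
    (hX : Measurable X) (hZ : Measurable Z) (hR : Measurable R)
    (hXbd : ∃ C, ∀ ω i, |X ω i| ≤ C) (hZbd : ∃ C, ∀ ω, |Z ω| ≤ C)
    (hR01 : ∀ ω, R ω = 0 ∨ R ω = 1)
    (Γ : Matrix (Fin (p + 1)) (Fin d) ℝ) (v : Fin p → ℝ)
    -- `ρ = P(R = 1) ∈ (0, 1)`
    (ρ : ℝ) (hρdef : ρ = (P {ω | R ω = 1}).toReal) (hρ0 : 0 < ρ) (hρ1 : ρ < 1)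
    -- density setup: the conditional law of `W` given `R = r` has density `η_r` w.r.t. `μ`
    (μ : Measure (Fin d → ℝ)) (hμ : SigmaFinite μ)
    (η₀ η₁ : (Fin d → ℝ) → ℝ) (hη₀m : Measurable η₀) (hη₁m : Measurable η₁)
    (hη₀0 : ∀ w, 0 ≤ η₀ w) (hη₁0 : ∀ w, 0 ≤ η₁ w)
    (hdens₀ : Measure.map (fun ω => matT Γ (tilde Z X ω)) (P[|{ω | R ω = 0}])
      = μ.withDensity fun w => ENNReal.ofReal (η₀ w))
    (hdens₁ : Measure.map (fun ω => matT Γ (tilde Z X ω)) (P[|{ω | R ω = 1}])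
      = μ.withDensity fun w => ENNReal.ofReal (η₁ w))
    -- `a_r(W)` is a version of `E[⟨X, v⟩ ∣ σ(W)]` under `P(· ∣ R = r)`
    (a₀ a₁ : (Fin d → ℝ) → ℝ) (ha₀m : Measurable a₀) (ha₁m : Measurable a₁)
    (ha₀ver : (fun ω => a₀ (matT Γ (tilde Z X ω))) =ᵐ[P[|{ω | R ω = 0}]]
      (P[|{ω | R ω = 0}])[fun ω => X ω ⬝ᵥ v |
        MeasurableSpace.comap (fun ω => matT Γ (tilde Z X ω)) inferInstance])
    (ha₁ver : (fun ω => a₁ (matT Γ (tilde Z X ω))) =ᵐ[P[|{ω | R ω = 1}]]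
      (P[|{ω | R ω = 1}])[fun ω => X ω ⬝ᵥ v |
        MeasurableSpace.comap (fun ω => matT Γ (tilde Z X ω)) inferInstance])
    -- regularity condition: for `μ`-a.e. `w`, `J₁(w) = 0` implies `J₀(w) = 0`
    (hreg : ∀ᵐ w ∂μ, a₁ w * η₁ w = 0 → a₀ w * η₀ w = 0) :
    -- `π_*⁻¹` is well defined `μ`-a.e. on `{J₁ ≠ 0}` ...
    (∀ᵐ w ∂μ, a₁ w * η₁ w ≠ 0 → ρ * (a₁ w * η₁ w) ≠ 0) ∧
      -- ... and it solves the weighting equation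
      ∀ f : (Fin d → ℝ) → ℝ, Measurable f → (∃ C, ∀ w, |f w| ≤ C) →
        ∫ ω, (R ω * piStarInv ρ (fun w => a₀ w * η₀ w) (fun w => a₁ w * η₁ w)
            (matT Γ (tilde Z X ω)) - 1) * f (matT Γ (tilde Z X ω)) * (X ω ⬝ᵥ v) ∂P = 0 :=
  piStarInv_solves_weighting_equation_general X Z R hX hZ hR hXbd hR01 Γ v ρ hρdef hρ0 μ η₀ η₁ hη₀m
    hη₁m hη₀0 hη₁0 hdens₀ hdens₁ a₀ a₁ ha₀m ha₁m ha₀ver ha₁ver hreg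
end
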